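/- arXiv:2102.08124 — 3 statements merged into one kernel-verified Lean document; each statement's English description precedes it below -/
import Mathlib

section
/- Let P be the edge set output by the greedy 2-approximation algorithm (Algorithm 1), let W(P) be its total weight, and let W* be the minimum total weight of an exact pruning set. Then W(P) ≤ 2·W*, i.e., the greedy algorithm is a 2-approximation for the minimum-weight exact pruning problem. -/
/-!
Setting: the complete bipartite graph `K_{M,M}`.  An edge is a pair
`(u, v) : Fin M × Fin M` joining left vertex `u` with right vertex `v`.
Edge weights are `w (u, v) = |W u v|` for an `M × M` real matrix `W`.
-/

/-- Number of edges of `P` incident to the left vertex `u`. -/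
def degL {M : ℕ} (P : Finset (Fin M × Fin M)) (u : Fin M) : ℕ :=
  (P.filter fun e => e.1 = u).card

/-- Number of edges of `P` incident to the right vertex `v`. -/
def degR {M : ℕ} (P : Finset (Fin M × Fin M)) (v : Fin M) : ℕ :=
  (P.filter fun e => e.2 = v).card

/-- One step of the greedy algorithm: add the edge `e = (u, v)` to the current set `P`
iff `u` is incident to fewer than `k` edges of `P` or `v` is incident to fewer than `k`
edges of `P`. -/
def greedyStep {M : ℕ} (k : ℕ) (P : Finset (Fin M × Fin M)) (e : Fin M × Fin M) :
    Finset (Fin M × Fin M) :=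
  if degL P e.1 < k ∨ degR P e.2 < k then insert e P else P

/-- The greedy 2-approximation algorithm (Algorithm 1): process the edges in the order
given by the list `L`, starting from `∅`. -/
def greedy {M : ℕ} (k : ℕ) (L : List (Fin M × Fin M)) : Finset (Fin M × Fin M) :=
  L.foldl (greedyStep k) ∅

/-- An exact pruning set: every left vertex and every right vertex is incident to
exactly `k` of its edges. -/
def IsExactPruning {M : ℕ} (k : ℕ) (Q : Finset (Fin M × Fin M)) : Prop :=
  (∀ u : Fin M, degL Q u = k) ∧ (∀ v : Fin M, degR Q v = k)

/-!
Stop the algorithm after a prefix of `L`; let `T` be the processed edges and `P'` the current set.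
Each edge accepted later fills a missing unit of degree at one of its endpoints, so at most
`∑ᵤ (k - deg_{P'} u) + ∑ᵥ (k - deg_{P'} v)` edges outside `T` end up in `P`. Conversely a vertex
accepts every edge offered to it until its degree reaches `k`, so `deg_{P'} x ≥ min k (deg_T x)`,
and `k - deg_{P'} x` is at most the number of edges of `Q` at `x` outside `T`. Summing over both
sides, `#(P \ T) ≤ 2 #(Q \ T)` for every prefix `T`. Since the weights are nonnegative and
nondecreasing along `L`, domination of the counts on every suffix of `L` gives domination of the
weights (Abel summation).
-/

namespace GreedyPruning

open Finset

section Abel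

variable {α : Type*} [DecidableEq α]

theorem sum_sub_le_mul_sum_sub_of_card_sdiff_take_le (w : α → ℝ) (r : ℝ) {l : List α}
    (hl : l.Pairwise (w · ≤ w ·)) {A B : Finset α} (hA : ∀ a ∈ A, a ∈ l) (hB : ∀ b ∈ B, b ∈ l)
    (h : ∀ n, (#(A \ (l.take n).toFinset) : ℝ) ≤ r * #(B \ (l.take n).toFinset))
    {c : ℝ} (hc : ∀ x ∈ l, c ≤ w x) :
    ∑ a ∈ A, (w a - c) ≤ r * ∑ b ∈ B, (w b - c) := by
  induction l generalizing A B c with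
  | nil =>
    simp only [List.not_mem_nil, imp_false] at hA hB
    simp [eq_empty_of_forall_notMem hA, eq_empty_of_forall_notMem hB]
  | cons x l ih =>
    rw [List.pairwise_cons] at hl
    -- Moving the baseline from `c` up to `w x` kills the term of the head `x`.
    have hsplit (S : Finset α) :
        ∑ a ∈ S, (w a - c) = ∑ a ∈ S.erase x, (w a - w x) + (w x - c) * #S := by
      rw [sum_erase S (f := fun a => w a - w x) (sub_self (w x))]
      simp only [sum_sub_distrib, sum_const, nsmul_eq_mul]
      ring
    have hmem {S : Finset α} (hS : ∀ a ∈ S, a ∈ x :: l) : ∀ a ∈ S.erase x, a ∈ l := by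
      intro a ha
      obtain ⟨hax, haS⟩ := mem_erase.1 ha
      exact (List.mem_cons.1 (hS a haS)).resolve_left hax
    have htail : ∑ a ∈ A.erase x, (w a - w x) ≤ r * ∑ b ∈ B.erase x, (w b - w x) := by
      refine ih hl.2 (hmem hA) (hmem hB) (fun n => ?_) hl.1
      simpa [sdiff_insert, erase_sdiff_comm] using h (n + 1)
    have hcount : (w x - c) * #A ≤ (w x - c) * (r * #B) :=
      mul_le_mul_of_nonneg_left (by simpa using h 0) (sub_nonneg.2 (hc x List.mem_cons_self))
    rw [hsplit A, hsplit B]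
    linarith

theorem sum_le_mul_sum_of_card_sdiff_take_le (w : α → ℝ) (r : ℝ) {l : List α}
    (hl : l.Pairwise (w · ≤ w ·)) {A B : Finset α} (hA : ∀ a ∈ A, a ∈ l) (hB : ∀ b ∈ B, b ∈ l)
    (h : ∀ n, (#(A \ (l.take n).toFinset) : ℝ) ≤ r * #(B \ (l.take n).toFinset))
    (hw : ∀ x ∈ l, 0 ≤ w x) :
    ∑ a ∈ A, w a ≤ r * ∑ b ∈ B, w b := by
  simpa using sum_sub_le_mul_sum_sub_of_card_sdiff_take_le w r hl hA hB h hw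

end Abel

section Degree

variable {E V : Type*} [DecidableEq V]

def deg (π : E → V) (S : Finset E) (x : V) : ℕ := #{e ∈ S | π e = x}

theorem deg_mono (π : E → V) {S S' : Finset E} (h : S ⊆ S') (x : V) : deg π S x ≤ deg π S' x :=
  card_le_card (filter_subset_filter _ h)

theorem deg_insert_self [DecidableEq E] (π : E → V) {S : Finset E} {e : E} (he : e ∉ S) :
    deg π (insert e S) (π e) = deg π S (π e) + 1 := by
  rw [deg, filter_insert, if_pos rfl, card_insert_of_notMem (by simp [he])]
  rfl

theorem deg_insert_of_ne [DecidableEq E] (π : E → V) (S : Finset E) {e : E} {x : V}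
    (h : π e ≠ x) : deg π (insert e S) x = deg π S x := by
  rw [deg, filter_insert, if_neg h]
  rfl

theorem deg_le_deg_sdiff_add_deg [DecidableEq E] (π : E → V) (Q T : Finset E) (x : V) :
    deg π Q x ≤ deg π (Q \ T) x + deg π T x := by
  have h : {e ∈ Q \ T | π e = x} = {e ∈ Q | π e = x} \ {e ∈ T | π e = x} := by
    ext e; simp only [mem_filter, mem_sdiff]; tauto
  rw [deg, deg, deg, h]
  exact card_le_card_sdiff_add_card

theorem sum_deg [Fintype V] (π : E → V) (S : Finset E) : ∑ x, deg π S x = #S :=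
  (card_eq_sum_card_fiberwise fun _ _ => mem_univ _).symm

def deficit [Fintype V] (k : ℕ) (π : E → V) (S : Finset E) : ℕ := ∑ x, (k - deg π S x)

theorem deficit_anti [Fintype V] (k : ℕ) (π : E → V) {S S' : Finset E} (h : S ⊆ S') :
    deficit k π S' ≤ deficit k π S :=
  sum_le_sum fun x _ => Nat.sub_le_sub_left (deg_mono π h x) k

theorem deficit_insert_lt [Fintype V] [DecidableEq E] {k : ℕ} (π : E → V) {S : Finset E}
    {e : E} (he : e ∉ S) (h : deg π S (π e) < k) :
    deficit k π (insert e S) < deficit k π S := by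
  refine sum_lt_sum (fun x _ => Nat.sub_le_sub_left (deg_mono π (subset_insert e S) x) k)
    ⟨π e, mem_univ _, ?_⟩
  rw [deg_insert_self π he]
  omega

end Degree

section Greedy

variable {M k : ℕ}

theorem subset_greedyStep (S : Finset (Fin M × Fin M)) (e : Fin M × Fin M) :
    S ⊆ greedyStep k S e := by
  unfold greedyStep
  split_ifs
  exacts [subset_insert e S, subset_rfl]

theorem greedyStep_subset_insert (S : Finset (Fin M × Fin M)) (e : Fin M × Fin M) :
    greedyStep k S e ⊆ insert e S := by
  unfold greedyStep
  split_ifs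
  exacts [subset_rfl, subset_insert e S]

theorem mem_greedyStep_of_deg_lt {π : Fin M × Fin M → Fin M} (hπ : π = Prod.fst ∨ π = Prod.snd)
    {S : Finset (Fin M × Fin M)} {e : Fin M × Fin M} (h : deg π S (π e) < k) :
    e ∈ greedyStep k S e := by
  rw [greedyStep, if_pos (by rcases hπ with rfl | rfl; exacts [Or.inl h, Or.inr h])]
  exact mem_insert_self e S

theorem subset_foldl_greedyStep (l : List (Fin M × Fin M)) (S : Finset (Fin M × Fin M)) :
    S ⊆ l.foldl (greedyStep k) S := by
  induction l generalizing S with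
  | nil => exact subset_rfl
  | cons e l ih => exact (subset_greedyStep S e).trans (ih _)

theorem greedy_append_singleton (l : List (Fin M × Fin M)) (e : Fin M × Fin M) :
    greedy k (l ++ [e]) = greedyStep k (greedy k l) e := by
  simp [greedy]

theorem greedy_subset_toFinset (l : List (Fin M × Fin M)) : greedy k l ⊆ l.toFinset := by
  induction l using List.reverseRecOn with
  | nil => simp [greedy]
  | append_singleton l e ih =>
    rw [greedy_append_singleton, List.toFinset_append]
    exact (greedyStep_subset_insert _ e).trans
      (insert_subset (by simp) (ih.trans subset_union_left))

theorem min_deg_toFinset_le_deg_greedy {π : Fin M × Fin M → Fin M}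
    (hπ : π = Prod.fst ∨ π = Prod.snd) (l : List (Fin M × Fin M)) (x : Fin M) :
    min k (deg π l.toFinset x) ≤ deg π (greedy k l) x := by
  induction l using List.reverseRecOn with
  | nil => simp [deg]
  | append_singleton l e ih =>
    have htoFinset : (l ++ [e]).toFinset = insert e l.toFinset := by
      rw [List.toFinset_append, union_comm]; rfl
    rw [greedy_append_singleton, htoFinset]
    have hstep := deg_mono π (subset_greedyStep (k := k) (greedy k l) e) x
    by_cases hnew : e ∉ l.toFinset ∧ π e = x
    · obtain ⟨he, rfl⟩ := hnew
      rw [deg_insert_self π he]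
      by_cases hlt : deg π (greedy k l) (π e) < k
      · have hins := deg_mono π (insert_subset (mem_greedyStep_of_deg_lt hπ hlt)
          (subset_greedyStep (greedy k l) e)) (π e)
        rw [deg_insert_self π fun h => he (greedy_subset_toFinset l h)] at hins
        omega
      · omega
    · have hsame : deg π (insert e l.toFinset) x = deg π l.toFinset x := by
        rcases not_and_or.1 hnew with h | h
        · rw [insert_eq_of_mem (not_not.1 h)]
        · exact deg_insert_of_ne π _ h
      omega

theorem deficit_greedy_le_card_sdiff {π : Fin M × Fin M → Fin M}
    (hπ : π = Prod.fst ∨ π = Prod.snd) {Q : Finset (Fin M × Fin M)} (hQ : ∀ x, deg π Q x = k)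
    (l : List (Fin M × Fin M)) : deficit k π (greedy k l) ≤ #(Q \ l.toFinset) := by
  rw [← sum_deg π (Q \ l.toFinset)]
  refine sum_le_sum fun x _ => ?_
  have hmin := min_deg_toFinset_le_deg_greedy (k := k) hπ l x
  have hsplit := deg_le_deg_sdiff_add_deg π Q l.toFinset x
  have hQx := hQ x
  omega

def potential (k : ℕ) (S : Finset (Fin M × Fin M)) : ℕ :=
  #S + deficit k Prod.fst S + deficit k Prod.snd S

theorem potential_greedyStep_le (S : Finset (Fin M × Fin M)) (e : Fin M × Fin M) :
    potential k (greedyStep k S e) ≤ potential k S := by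
  unfold greedyStep potential
  split_ifs with h
  · by_cases he : e ∈ S
    · rw [insert_eq_of_mem he]
    · have hL := deficit_anti k Prod.fst (subset_insert e S)
      have hR := deficit_anti k Prod.snd (subset_insert e S)
      rw [card_insert_of_notMem he]
      rcases h with h | h
      · have := deficit_insert_lt Prod.fst he h
        omega
      · have := deficit_insert_lt Prod.snd he h
        omega
  · exact le_rfl

theorem potential_foldl_greedyStep_le (l : List (Fin M × Fin M)) (S : Finset (Fin M × Fin M)) :
    potential k (l.foldl (greedyStep k) S) ≤ potential k S := by
  induction l generalizing S with
  | nil => exact le_rfl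
  | cons e l ih => exact (ih _).trans (potential_greedyStep_le S e)

theorem card_greedy_sdiff_take_le {Q : Finset (Fin M × Fin M)} (hQ : IsExactPruning k Q)
    (L : List (Fin M × Fin M)) (n : ℕ) :
    #(greedy k L \ (L.take n).toFinset) ≤ 2 * #(Q \ (L.take n).toFinset) := by
  have hsplit : greedy k L = (L.drop n).foldl (greedyStep k) (greedy k (L.take n)) := by
    rw [greedy, greedy, ← List.foldl_append, List.take_append_drop]
  have hsub : greedy k (L.take n) ⊆ greedy k L := hsplit ▸ subset_foldl_greedyStep _ _
  have hcard : #(greedy k L \ (L.take n).toFinset) + #(greedy k (L.take n)) ≤ #(greedy k L) := by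
    rw [← card_sdiff_add_card_eq_card hsub]
    gcongr
    exact greedy_subset_toFinset _
  have hpot : potential k (greedy k L) ≤ potential k (greedy k (L.take n)) :=
    hsplit ▸ potential_foldl_greedyStep_le _ _
  have hL := deficit_greedy_le_card_sdiff (Or.inl rfl) hQ.1 (L.take n)
  have hR := deficit_greedy_le_card_sdiff (Or.inr rfl) hQ.2 (L.take n)
  unfold potential at hpot
  omega

end Greedy

end GreedyPruning

theorem greedy_two_approximation_general (M : ℕ)
    (W : Matrix (Fin M) (Fin M) ℝ) (w : Fin M × Fin M → ℝ)
    (hw : ∀ e : Fin M × Fin M, w e = |W e.1 e.2|)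
    (L : List (Fin M × Fin M))
    (hcomplete : ∀ e : Fin M × Fin M, e ∈ L)
    (hsorted : L.Pairwise fun a b => w a ≤ w b)
    (Q : Finset (Fin M × Fin M)) (hQ : IsExactPruning (M / 2) Q) :
    ∑ e ∈ greedy (M / 2) L, w e ≤ 2 * ∑ e ∈ Q, w e := by
  refine GreedyPruning.sum_le_mul_sum_of_card_sdiff_take_le w 2 hsorted
    (fun e _ => hcomplete e) (fun e _ => hcomplete e) (fun n => ?_) (fun e _ => hw e ▸ abs_nonneg _)
  exact_mod_cast GreedyPruning.card_greedy_sdiff_take_le hQ L n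

/-- The greedy algorithm (with per-vertex requirement `M / 2`, run on an
enumeration `L` of all edges of `K_{M,M}` in nondecreasing order of weight) outputs an edge
set `P` whose total weight `W(P)` satisfies `W(P) ≤ 2 · W*`, where `W*` is the minimum
total weight of an exact pruning set; equivalently, `W(P) ≤ 2 · W(Q)` for every exact
pruning set `Q`. -/
theorem greedy_two_approximation (M : ℕ) (hM : 0 < M) (hMeven : Even M)
    (W : Matrix (Fin M) (Fin M) ℝ) (w : Fin M × Fin M → ℝ)
    (hw : ∀ e : Fin M × Fin M, w e = |W e.1 e.2|)
    (L : List (Fin M × Fin M)) (hnodup : L.Nodup)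
    (hcomplete : ∀ e : Fin M × Fin M, e ∈ L)
    (hsorted : L.Pairwise fun a b => w a ≤ w b)
    (Q : Finset (Fin M × Fin M)) (hQ : IsExactPruning (M / 2) Q) :
    ∑ e ∈ greedy (M / 2) L, w e ≤ 2 * ∑ e ∈ Q, w e :=
  greedy_two_approximation_general M W w hw L hcomplete hsorted Q hQ
end

section
/- Fix any vertex i of K_{M,M} and any exact pruning set Q. Let e'_1,…,e'_{M/2} be the edges of Q incident to i, sorted in nondecreasing order of weight, and let e_1,…,e_{M/2} be the first M/2 edges incident to i that the greedy 2-approximation algorithm (Algorithm 1) adds to P, listed in the order in which the algorithm adds them (this order is nondecreasing in weight). Then for every n with 1 ≤ n ≤ M/2, it holds that w(e_n) ≤ w(e'_n). -/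
/-- A vertex of `K_{M,M}`: either a left vertex `Sum.inl u` or a right vertex `Sum.inr v`. -/
def Inc {M : ℕ} : (Fin M ⊕ Fin M) → (Fin M × Fin M) → Prop
  | Sum.inl u, e => e.1 = u
  | Sum.inr v, e => e.2 = v

instance {M : ℕ} (x : Fin M ⊕ Fin M) (e : Fin M × Fin M) : Decidable (Inc x e) := by
  cases x
  · exact inferInstanceAs (Decidable (e.1 = _))
  · exact inferInstanceAs (Decidable (e.2 = _))

/-- The edges added to `P` by the greedy algorithm, listed in the order in which the
algorithm adds them (i.e. in the order of the enumeration `L`). -/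
def addedList {M : ℕ} (k : ℕ) (L : List (Fin M × Fin M)) : List (Fin M × Fin M) :=
  L.filter fun e => decide (e ∈ greedy k L)

/-- `E(x)`: the first `k` edges incident to the vertex `x` that the greedy algorithm adds
to `P`, in order of addition. -/
def firstEdges {M : ℕ} (k : ℕ) (L : List (Fin M × Fin M)) (x : Fin M ⊕ Fin M) :
    List (Fin M × Fin M) :=
  ((addedList k L).filter fun e => decide (Inc x e)).take k

/-! Exchange argument. Suppose `w (e'_n) < w (e_n)`. Then `e'_1, …, e'_n` all precede `e_n` in
the sorted enumeration. Before `e_n` the vertex `i` has only `n - 1 < M/2` greedy edges, so it is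
unsaturated whenever some `e'_j` is processed, and the greedy takes all of them: that makes `n`
greedy edges at `i` before `e_n`, a contradiction. -/

namespace List

variable {α β : Type*} [LinearOrder β] {w : α → β}

theorem mem_left_of_lt_of_pairwise {l₁ l₂ : List α} {a x : α}
    (hsorted : (l₁ ++ a :: l₂).Pairwise fun a b => w a ≤ w b)
    (hx : x ∈ l₁ ++ a :: l₂) (hlt : w x < w a) : x ∈ l₁ := by
  rcases mem_append.1 hx with hx | hx
  · exact hx
  · have hle : ∀ y ∈ a :: l₂, w a ≤ w y := by
      rintro y (_ | ⟨_, hy⟩)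
      · exact le_rfl
      · exact rel_of_pairwise_cons (pairwise_append.1 hsorted).2.1 hy
    exact absurd (hle x hx) (not_le.2 hlt)

theorem le_getElem_of_countP_le {l : List α} (hsorted : l.Pairwise fun a b => w a ≤ w b)
    {c : β} {n : ℕ} (hcount : l.countP (fun b => w b < c) ≤ n) (hn : n < l.length) :
    c ≤ w l[n] := by
  by_contra! hlt
  have htake : ∀ b ∈ l.take (n + 1), decide (w b < c) = true := by
    intro b hb
    obtain ⟨j, hj, rfl⟩ := mem_iff_getElem.1 hb
    rw [length_take] at hj
    rw [getElem_take, decide_eq_true_eq]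
    refine lt_of_le_of_lt ?_ hlt
    rcases (Nat.lt_succ_iff.1 (lt_of_lt_of_le hj (min_le_left _ _))).eq_or_lt with rfl | hjn
    · exact le_rfl
    · exact hsorted.rel_get_of_lt (a := ⟨j, _⟩) (b := ⟨n, hn⟩) hjn
  have := ((take_sublist (n + 1) l).countP_le (p := fun b => w b < c)).trans hcount
  rw [countP_eq_length.2 htake, length_take] at this
  omega

theorem length_filter_eq_of_getElem_filter {p : α → Bool} {l₁ l₂ : List α} {a : α}
    (hnd : ((l₁ ++ a :: l₂).filter p).Nodup) {n : ℕ}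
    (hn : n < ((l₁ ++ a :: l₂).filter p).length) (ha : ((l₁ ++ a :: l₂).filter p)[n] = a) :
    (l₁.filter p).length = n := by
  have hpa : p a := (mem_filter.1 (ha ▸ getElem_mem hn)).2
  have hsplit : (l₁ ++ a :: l₂).filter p = l₁.filter p ++ a :: l₂.filter p := by
    rw [filter_append, filter_cons_of_pos hpa]
  have hlen : (l₁.filter p).length < ((l₁ ++ a :: l₂).filter p).length := by simp [hsplit]
  have hget : ((l₁ ++ a :: l₂).filter p)[(l₁.filter p).length] = a := by
    rw [getElem_of_eq hsplit hlen, getElem_append_right le_rfl]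
    simp
  exact hnd.getElem_inj_iff.1 (hget.trans ha.symm)

end List

section Greedy

open Finset

variable {M k : ℕ}

def deg (P : Finset (Fin M × Fin M)) (x : Fin M ⊕ Fin M) : ℕ :=
  #(P.filter fun e => Inc x e)

theorem deg_mono {P P' : Finset (Fin M × Fin M)} (h : P ⊆ P') (x : Fin M ⊕ Fin M) :
    deg P x ≤ deg P' x :=
  card_le_card (filter_subset_filter _ h)

theorem deg_eq_of_isExactPruning {Q : Finset (Fin M × Fin M)} (hQ : IsExactPruning k Q)
    (x : Fin M ⊕ Fin M) : deg Q x = k := by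
  cases x with
  | inl u => exact hQ.1 u
  | inr v => exact hQ.2 v

theorem deg_univ (x : Fin M ⊕ Fin M) : deg univ x = M := by
  cases x with
  | inl u =>
    have : (univ.filter fun e : Fin M × Fin M => Inc (Sum.inl u) e) = {u} ×ˢ univ := by
      ext ⟨a, b⟩
      simp [Inc, eq_comm]
    simp [deg, this]
  | inr v =>
    have : (univ.filter fun e : Fin M × Fin M => Inc (Sum.inr v) e) = univ ×ˢ {v} := by
      ext ⟨a, b⟩
      simp [Inc, eq_comm]
    simp [deg, this]

theorem mem_greedyStep_self {P : Finset (Fin M × Fin M)} {e : Fin M × Fin M}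
    {x : Fin M ⊕ Fin M} (hx : Inc x e) (hdeg : deg P x < k) : e ∈ greedyStep k P e := by
  have hunsat : degL P e.1 < k ∨ degR P e.2 < k := by
    cases x with
    | inl u => exact Or.inl ((hx : e.1 = u) ▸ hdeg)
    | inr v => exact Or.inr ((hx : e.2 = v) ▸ hdeg)
  simp [greedyStep, hunsat]

theorem subset_foldl_greedyStep (P : Finset (Fin M × Fin M)) (L : List (Fin M × Fin M)) :
    P ⊆ L.foldl (greedyStep k) P := by
  induction L generalizing P with
  | nil => exact Subset.rfl
  | cons e L ih =>
    refine Subset.trans ?_ (ih _)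
    unfold greedyStep
    split_ifs
    exacts [subset_insert _ _, Subset.rfl]

theorem foldl_greedyStep_subset (P : Finset (Fin M × Fin M)) (L : List (Fin M × Fin M)) :
    L.foldl (greedyStep k) P ⊆ P ∪ L.toFinset := by
  induction L generalizing P with
  | nil => simp
  | cons e L ih =>
    refine (ih _).trans fun f hf => ?_
    simp only [greedyStep, mem_union, List.toFinset_cons, mem_insert, List.mem_toFinset] at hf ⊢
    split_ifs at hf <;> grind

theorem greedy_subset_toFinset (L : List (Fin M × Fin M)) : greedy k L ⊆ L.toFinset := by
  simpa [greedy] using foldl_greedyStep_subset (k := k) ∅ L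

theorem greedy_append (L₁ L₂ : List (Fin M × Fin M)) :
    greedy k (L₁ ++ L₂) = L₂.foldl (greedyStep k) (greedy k L₁) :=
  List.foldl_append

theorem greedy_subset_greedy_append (L₁ L₂ : List (Fin M × Fin M)) :
    greedy k L₁ ⊆ greedy k (L₁ ++ L₂) := by
  rw [greedy_append]
  exact subset_foldl_greedyStep _ _

theorem mem_greedy_iff_of_nodup_append {L₁ L₂ : List (Fin M × Fin M)}
    (hnd : (L₁ ++ L₂).Nodup) {e : Fin M × Fin M} :
    e ∈ greedy k L₁ ↔ e ∈ L₁ ∧ e ∈ greedy k (L₁ ++ L₂) := by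
  refine ⟨fun h => ⟨List.mem_toFinset.1 (greedy_subset_toFinset L₁ h),
    greedy_subset_greedy_append L₁ L₂ h⟩, fun ⟨he₁, he⟩ => ?_⟩
  rw [greedy_append] at he
  rcases mem_union.1 (foldl_greedyStep_subset _ _ he) with he | he₂
  · exact he
  · exact absurd (List.mem_toFinset.1 he₂) (List.disjoint_of_nodup_append hnd he₁)

theorem filter_greedy_eq_of_deg_lt {L : List (Fin M × Fin M)} {x : Fin M ⊕ Fin M}
    (hdeg : deg (greedy k L) x < k) :
    (greedy k L).filter (fun e => Inc x e) = L.toFinset.filter (fun e => Inc x e) := by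
  refine (filter_subset_filter _ (greedy_subset_toFinset L)).antisymm fun e he => ?_
  obtain ⟨heL, hx⟩ := mem_filter.1 he
  obtain ⟨L₁, L₂, rfl⟩ := List.append_of_mem (List.mem_toFinset.1 heL)
  have hdeg₁ : deg (greedy k L₁) x < k :=
    (deg_mono (greedy_subset_greedy_append L₁ _) x).trans_lt hdeg
  refine mem_filter.2 ⟨?_, hx⟩
  rw [greedy_append, List.foldl_cons]
  exact subset_foldl_greedyStep _ _ (mem_greedyStep_self hx hdeg₁)

theorem le_deg_greedy {L : List (Fin M × Fin M)} (hcomplete : ∀ e, e ∈ L) (hk : k ≤ M)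
    (x : Fin M ⊕ Fin M) : k ≤ deg (greedy k L) x := by
  by_contra! hdeg
  have hL : L.toFinset = univ := eq_univ_of_forall fun e => List.mem_toFinset.2 (hcomplete e)
  have := congrArg card (filter_greedy_eq_of_deg_lt hdeg)
  rw [hL] at this
  have hM : deg (greedy k L) x = M := this.trans (deg_univ x)
  omega

def addedAt (k : ℕ) (L : List (Fin M × Fin M)) (x : Fin M ⊕ Fin M) : List (Fin M × Fin M) :=
  (addedList k L).filter fun e => decide (Inc x e)

theorem firstEdges_eq_take (L : List (Fin M × Fin M)) (x : Fin M ⊕ Fin M) :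
    firstEdges k L x = (addedAt k L x).take k :=
  rfl

theorem length_filter_greedy_append {L₁ L₂ : List (Fin M × Fin M)} (hnd : (L₁ ++ L₂).Nodup)
    (x : Fin M ⊕ Fin M) :
    ((L₁.filter fun e => decide (e ∈ greedy k (L₁ ++ L₂))).filter
      fun e => decide (Inc x e)).length = deg (greedy k L₁) x := by
  rw [← List.toFinset_card_of_nodup (((List.nodup_append.1 hnd).1.filter _).filter _)]
  congr 1
  ext e
  simp only [and_comm, List.mem_toFinset, List.mem_filter, decide_eq_true_eq, mem_filter,
    mem_greedy_iff_of_nodup_append hnd]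

theorem length_addedAt {L : List (Fin M × Fin M)} (hnodup : L.Nodup) (x : Fin M ⊕ Fin M) :
    (addedAt k L x).length = deg (greedy k L) x := by
  simpa [addedAt, addedList] using
    length_filter_greedy_append (k := k) (L₂ := []) (by simpa using hnodup) x

theorem deg_greedy_eq_of_getElem_addedAt {L L₁ L₂ : List (Fin M × Fin M)}
    {e : Fin M × Fin M} (hnodup : L.Nodup) (hL : L = L₁ ++ e :: L₂) {x : Fin M ⊕ Fin M}
    {n : ℕ} (hn : n < (addedAt k L x).length) (he : (addedAt k L x)[n] = e) :
    deg (greedy k L₁) x = n := by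
  subst hL
  rw [← length_filter_greedy_append hnodup, List.filter_filter]
  unfold addedAt addedList at hn he
  simp only [List.filter_filter] at hn he
  exact List.length_filter_eq_of_getElem_filter (hnodup.filter _) hn he

theorem countP_weight_lt_getElem_addedAt_le {β : Type*} [LinearOrder β]
    {w : Fin M × Fin M → β} {L : List (Fin M × Fin M)} (hnodup : L.Nodup)
    (hcomplete : ∀ e, e ∈ L)
    (hsorted : L.Pairwise fun a b => w a ≤ w b) {x : Fin M ⊕ Fin M}
    {B : List (Fin M × Fin M)} (hB : B.Nodup) (hBx : ∀ b ∈ B, Inc x b)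
    {n : ℕ} (hnk : n < k) (hn : n < (addedAt k L x).length) :
    B.countP (fun b => w b < w (addedAt k L x)[n]) ≤ n := by
  set e := (addedAt k L x)[n]
  have heL : e ∈ L := (List.mem_filter.1 (List.mem_filter.1 (List.getElem_mem hn)).1).1
  obtain ⟨L₁, L₂, hL⟩ := List.append_of_mem heL
  have hdeg : deg (greedy k L₁) x = n := deg_greedy_eq_of_getElem_addedAt hnodup hL hn rfl
  have hsub : (B.filter fun b => w b < w e).toFinset ⊆ (greedy k L₁).filter (Inc x ·) := by
    rw [filter_greedy_eq_of_deg_lt (hdeg ▸ hnk)]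
    intro b hb
    obtain ⟨hbB, hlt⟩ := List.mem_filter.1 (List.mem_toFinset.1 hb)
    refine mem_filter.2 ⟨List.mem_toFinset.2 ?_, hBx b hbB⟩
    exact List.mem_left_of_lt_of_pairwise (hL ▸ hsorted) (hL ▸ hcomplete b)
      (of_decide_eq_true hlt)
  calc B.countP (fun b => w b < w e)
      = (B.filter fun b => w b < w e).toFinset.card := by
        rw [List.countP_eq_length_filter, List.toFinset_card_of_nodup (hB.filter _)]
    _ ≤ deg (greedy k L₁) x := card_le_card hsub
    _ = n := hdeg

end Greedy

theorem greedy_pointwise_le_general (M : ℕ) (w : Fin M × Fin M → ℝ)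
    (L : List (Fin M × Fin M)) (hnodup : L.Nodup)
    (hcomplete : ∀ e : Fin M × Fin M, e ∈ L)
    (hsorted : L.Pairwise fun a b => w a ≤ w b)
    (i : Fin M ⊕ Fin M)
    (Q : Finset (Fin M × Fin M)) (hQ : IsExactPruning (M / 2) Q)
    (B : List (Fin M × Fin M))
    (hBperm : B.Perm (Q.filter fun e => Inc i e).toList)
    (hBsorted : B.Pairwise fun a b => w a ≤ w b) :
    (firstEdges (M / 2) L i).length = M / 2 ∧ B.length = M / 2 ∧
    ∀ (n : ℕ) (hA : n < (firstEdges (M / 2) L i).length) (hB : n < B.length),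
      w ((firstEdges (M / 2) L i).get ⟨n, hA⟩) ≤ w (B.get ⟨n, hB⟩) := by
  have hsat := le_deg_greedy hcomplete (Nat.div_le_self M 2) i
  have hAlen : (firstEdges (M / 2) L i).length = M / 2 := by
    rw [firstEdges_eq_take, List.length_take, length_addedAt hnodup]
    omega
  have hBlen : B.length = M / 2 := by
    rw [hBperm.length_eq, Finset.length_toList]
    exact deg_eq_of_isExactPruning hQ i
  refine ⟨hAlen, hBlen, fun n hA hB => ?_⟩
  have hnk : n < M / 2 := hAlen ▸ hA
  have hn : n < (addedAt (M / 2) L i).length := by rw [length_addedAt hnodup]; omega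
  have hBx : ∀ b ∈ B, Inc i b := fun b hb =>
    (Finset.mem_filter.1 (Finset.mem_toList.1 (hBperm.subset hb))).2
  simp only [List.get_eq_getElem, firstEdges_eq_take, List.getElem_take]
  exact List.le_getElem_of_countP_le hBsorted (countP_weight_lt_getElem_addedAt_le hnodup
    hcomplete hsorted (hBperm.nodup_iff.2 (Finset.nodup_toList _)) hBx hnk hn) hB

/-- Fix a vertex `i` of `K_{M,M}` and an exact pruning set `Q`.  Let
`B = e'_1, …, e'_{M/2}` be the edges of `Q` incident to `i` sorted in nondecreasing order
of weight, and let `A = e_1, …, e_{M/2}` be the first `M/2` edges incident to `i` that the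
greedy algorithm adds to `P`, in order of addition.  Then `w (e_n) ≤ w (e'_n)` for every
`n` with `1 ≤ n ≤ M/2`. -/
theorem greedy_pointwise_le (M : ℕ) (hM : 0 < M) (hMeven : Even M)
    (W : Matrix (Fin M) (Fin M) ℝ) (w : Fin M × Fin M → ℝ)
    (hw : ∀ e : Fin M × Fin M, w e = |W e.1 e.2|)
    (L : List (Fin M × Fin M)) (hnodup : L.Nodup)
    (hcomplete : ∀ e : Fin M × Fin M, e ∈ L)
    (hsorted : L.Pairwise fun a b => w a ≤ w b)
    (i : Fin M ⊕ Fin M)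
    (Q : Finset (Fin M × Fin M)) (hQ : IsExactPruning (M / 2) Q)
    (B : List (Fin M × Fin M))
    (hBperm : B.Perm (Q.filter fun e => Inc i e).toList)
    (hBsorted : B.Pairwise fun a b => w a ≤ w b) :
    (firstEdges (M / 2) L i).length = M / 2 ∧ B.length = M / 2 ∧
    ∀ (n : ℕ) (hA : n < (firstEdges (M / 2) L i).length) (hB : n < B.length),
      w ((firstEdges (M / 2) L i).get ⟨n, hA⟩) ≤ w (B.get ⟨n, hB⟩) :=
  greedy_pointwise_le_general M w L hnodup hcomplete hsorted i Q hQ B hBperm hBsorted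
end

section
/- The approximation factor 2 of the greedy algorithm is asymptotically tight: for every positive integer M there exist a nonnegative weight matrix on the complete bipartite graph K_{M,M} and an enumeration of its edges in nondecreasing order of weight such that the greedy algorithm with per-vertex requirement 1 (add the current edge if and only if at least one of its endpoints is currently incident to no chosen edge) outputs an edge set of total weight 2M − 1, while the minimum total weight of a perfect matching (a set of edges with every vertex incident to exactly one edge) equals M. Consequently the achieved ratio is (2M − 1)/M, which converges to 2 as M → ∞. -/
/-!
With all weights equal to `1` every enumeration is nondecreasing, so the order may be chosen
adversarially.  List first the row of `u₀` and then the rest of the column of `v₀`: each of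
these `2M - 1` edges has an endpoint not yet covered and is taken, after which every vertex is
covered and all remaining edges are rejected.  A perfect matching, on the other hand, has
exactly `M` edges.
-/

section Degree

variable {M : ℕ}

lemma degL_insert_of_ne {P : Finset (Fin M × Fin M)} {e : Fin M × Fin M} {u : Fin M}
    (h : e.1 ≠ u) : degL (insert e P) u = degL P u := by
  rw [degL, Finset.filter_insert, if_neg h, degL]

lemma degR_insert_of_ne {P : Finset (Fin M × Fin M)} {e : Fin M × Fin M} {v : Fin M}
    (h : e.2 ≠ v) : degR (insert e P) v = degR P v := by
  rw [degR, Finset.filter_insert, if_neg h, degR]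

lemma degL_pos_of_mem {P : Finset (Fin M × Fin M)} {e : Fin M × Fin M} (he : e ∈ P) :
    0 < degL P e.1 :=
  Finset.card_pos.2 ⟨e, Finset.mem_filter.2 ⟨he, rfl⟩⟩

lemma degR_pos_of_mem {P : Finset (Fin M × Fin M)} {e : Fin M × Fin M} (he : e ∈ P) :
    0 < degR P e.2 :=
  Finset.card_pos.2 ⟨e, Finset.mem_filter.2 ⟨he, rfl⟩⟩

lemma degL_eq_zero_of_forall_ne {P : Finset (Fin M × Fin M)} {u : Fin M}
    (h : ∀ e ∈ P, e.1 ≠ u) : degL P u = 0 :=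
  Finset.card_eq_zero.2 (Finset.filter_eq_empty_iff.2 h)

lemma card_eq_sum_degL (Q : Finset (Fin M × Fin M)) : Q.card = ∑ u, degL Q u :=
  Finset.card_eq_sum_card_fiberwise fun e _ => Finset.mem_univ e.1

lemma IsExactPruning.card_eq {k : ℕ} {Q : Finset (Fin M × Fin M)} (hQ : IsExactPruning k Q) :
    Q.card = M * k := by
  simp [card_eq_sum_degL, hQ.1]

lemma isExactPruning_diag : IsExactPruning 1 (Finset.univ : Finset (Fin M)).diag := by
  have hfiber (x : Fin M) (p : Fin M × Fin M → Fin M) (hp : ∀ i, p (i, i) = i) :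
      (Finset.univ.diag.filter fun e => p e = x) = {(x, x)} := by
    ext ⟨a, b⟩
    simp only [Finset.mem_filter, Finset.mem_diag, Finset.mem_univ, true_and,
      Finset.mem_singleton, Prod.mk.injEq]
    constructor
    · rintro ⟨rfl, h⟩
      rw [hp] at h
      exact ⟨h, h⟩
    · rintro ⟨rfl, rfl⟩
      exact ⟨rfl, hp _⟩
  exact ⟨fun u => by rw [degL, hfiber u Prod.fst fun _ => rfl, Finset.card_singleton],
    fun v => by rw [degR, hfiber v Prod.snd fun _ => rfl, Finset.card_singleton]⟩

end Degree

section Greedy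

variable {M k : ℕ}

lemma foldl_greedyStep_of_degR_lt {l : List (Fin M × Fin M)} (hl : (l.map Prod.snd).Nodup)
    {P : Finset (Fin M × Fin M)} (h : ∀ e ∈ l, degR P e.2 < k) :
    l.foldl (greedyStep k) P = P ∪ l.toFinset := by
  induction l generalizing P with
  | nil => simp
  | cons e l ih =>
    rw [List.map_cons, List.nodup_cons] at hl
    have hstep : greedyStep k P e = insert e P :=
      if_pos (Or.inr (h e List.mem_cons_self))
    have hfresh : ∀ e' ∈ l, degR (insert e P) e'.2 < k := fun e' he' => by
      rw [degR_insert_of_ne fun heq => hl.1 (heq ▸ List.mem_map_of_mem he')]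
      exact h e' (List.mem_cons_of_mem _ he')
    rw [List.foldl_cons, hstep, ih hl.2 hfresh, List.toFinset_cons, Finset.insert_union,
      Finset.union_insert]

lemma foldl_greedyStep_of_degL_lt {l : List (Fin M × Fin M)} (hl : (l.map Prod.fst).Nodup)
    {P : Finset (Fin M × Fin M)} (h : ∀ e ∈ l, degL P e.1 < k) :
    l.foldl (greedyStep k) P = P ∪ l.toFinset := by
  induction l generalizing P with
  | nil => simp
  | cons e l ih =>
    rw [List.map_cons, List.nodup_cons] at hl
    have hstep : greedyStep k P e = insert e P :=
      if_pos (Or.inl (h e List.mem_cons_self))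
    have hfresh : ∀ e' ∈ l, degL (insert e P) e'.1 < k := fun e' he' => by
      rw [degL_insert_of_ne fun heq => hl.1 (heq ▸ List.mem_map_of_mem he')]
      exact h e' (List.mem_cons_of_mem _ he')
    rw [List.foldl_cons, hstep, ih hl.2 hfresh, List.toFinset_cons, Finset.insert_union,
      Finset.union_insert]

lemma foldl_greedyStep_of_covers {P : Finset (Fin M × Fin M)} (hL : ∀ u, k ≤ degL P u)
    (hR : ∀ v, k ≤ degR P v) (l : List (Fin M × Fin M)) : l.foldl (greedyStep k) P = P := by
  induction l with
  | nil => rfl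
  | cons e l ih =>
    have hstep : greedyStep k P e = P := if_neg (by simpa using ⟨hL e.1, hR e.2⟩)
    rw [List.foldl_cons, hstep, ih]

end Greedy

lemma List.exists_nodup_append_forall_mem {α : Type*} [Fintype α] [DecidableEq α] {l : List α}
    (hl : l.Nodup) : ∃ r, (l ++ r).Nodup ∧ ∀ x, x ∈ l ++ r := by
  refine ⟨(Finset.univ \ l.toFinset).toList, ?_, fun x => ?_⟩
  · refine List.nodup_append.2 ⟨hl, Finset.nodup_toList _, fun a ha b hb hab => ?_⟩
    subst hab
    simp_all
  · by_cases hx : x ∈ l <;> simp [hx]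

section DoubleStar

variable (n : ℕ)

def doubleStarList : List (Fin (n + 1) × Fin (n + 1)) :=
  (List.finRange (n + 1)).map (fun j => (0, j)) ++ (List.finRange n).map (fun i => (i.succ, 0))

lemma doubleStarList_nodup : (doubleStarList n).Nodup := by
  refine List.nodup_append.2 ⟨(List.nodup_finRange _).map fun a b h => by simpa using h,
    (List.nodup_finRange _).map fun a b h => by simpa using h, ?_⟩
  simpa using fun _ _ h => absurd h.symm (Fin.succ_ne_zero _)

lemma greedy_doubleStarList_append (r : List (Fin (n + 1) × Fin (n + 1))) :
    greedy 1 (doubleStarList n ++ r) = (doubleStarList n).toFinset := by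
  set row := (List.finRange (n + 1)).map (fun j => ((0 : Fin (n + 1)), j))
  set col := (List.finRange n).map (fun i => (i.succ, (0 : Fin (n + 1))))
  have hrow : row.foldl (greedyStep 1) ∅ = row.toFinset := by
    rw [foldl_greedyStep_of_degR_lt (by simp [row, Function.comp_def, List.nodup_finRange])
      (fun _ _ => by simp [degR]), Finset.empty_union]
  have hcol : col.foldl (greedyStep 1) row.toFinset = row.toFinset ∪ col.toFinset := by
    refine foldl_greedyStep_of_degL_lt ?_ fun e he => ?_
    · simpa [col, Function.comp_def] using
        (List.nodup_finRange n).map (Fin.succ_injective n)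
    · obtain ⟨i, -, rfl⟩ := List.mem_map.1 he
      rw [degL_eq_zero_of_forall_ne]
      · exact one_pos
      · simp [row, (Fin.succ_ne_zero i).symm]
  have hsplit : doubleStarList n = row ++ col := rfl
  rw [greedy, hsplit, List.foldl_append, List.foldl_append, hrow, hcol, ← List.toFinset_append]
  refine foldl_greedyStep_of_covers (fun u => ?_) (fun v => ?_) r
  · refine Fin.cases ?_ (fun i => ?_) u
    · exact degL_pos_of_mem (e := (0, 0)) (List.mem_toFinset.2 (by simp [row]))
    · exact degL_pos_of_mem (e := (i.succ, 0)) (List.mem_toFinset.2 (by simp [col]))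
  · exact degR_pos_of_mem (e := (0, v)) (List.mem_toFinset.2 (by simp [row]))

lemma card_doubleStarList_toFinset : (doubleStarList n).toFinset.card = 2 * (n + 1) - 1 := by
  rw [List.toFinset_card_of_nodup (doubleStarList_nodup n)]
  simp only [doubleStarList, List.length_append, List.length_map, List.length_finRange]
  omega

end DoubleStar

lemma tendsto_two_mul_sub_one_div :
    Filter.Tendsto (fun m : ℕ => (2 * (m : ℝ) - 1) / m) Filter.atTop (nhds 2) := by
  have h : Filter.Tendsto (fun m : ℕ => 2 - (m : ℝ)⁻¹) Filter.atTop (nhds (2 - 0)) :=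
    tendsto_const_nhds.sub tendsto_inv_atTop_nhds_zero_nat
  rw [sub_zero] at h
  refine h.congr' ?_
  filter_upwards [Filter.eventually_ge_atTop 1] with m hm
  have hm0 : (m : ℝ) ≠ 0 := by positivity
  field_simp

/-- The approximation factor 2 of the greedy algorithm is asymptotically
tight: for every positive integer `M` there exist nonnegative edge weights `w` on
`K_{M,M}` and an enumeration `L` of its edges in nondecreasing order of weight such that
the greedy algorithm with per-vertex requirement `1` outputs an edge set of total weight
`2M − 1`, while the minimum total weight of a perfect matching (an edge set in which every
vertex is incident to exactly one edge) equals `M`.  The achieved ratio `(2M − 1)/M`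
converges to `2` as `M → ∞`. -/
theorem greedy_ratio_tight (M : ℕ) (hM : 0 < M) :
    ∃ (w : Fin M × Fin M → ℝ) (L : List (Fin M × Fin M)),
      (∀ e : Fin M × Fin M, 0 ≤ w e) ∧
      L.Nodup ∧ (∀ e : Fin M × Fin M, e ∈ L) ∧
      (L.Pairwise fun a b => w a ≤ w b) ∧
      (∑ e ∈ greedy 1 L, w e) = 2 * (M : ℝ) - 1 ∧
      IsLeast {x : ℝ | ∃ Q : Finset (Fin M × Fin M),
        IsExactPruning 1 Q ∧ x = ∑ e ∈ Q, w e} (M : ℝ) ∧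
      Filter.Tendsto (fun m : ℕ => (2 * (m : ℝ) - 1) / m)
        Filter.atTop (nhds 2) := by
  obtain ⟨n, rfl⟩ := Nat.exists_eq_add_one_of_ne_zero hM.ne'
  obtain ⟨rest, hnodup, hall⟩ := List.exists_nodup_append_forall_mem (doubleStarList_nodup n)
  refine ⟨fun _ => 1, doubleStarList n ++ rest, fun _ => zero_le_one, hnodup, hall,
    List.pairwise_of_forall fun _ _ => le_rfl, ?_, ⟨?_, ?_⟩, tendsto_two_mul_sub_one_div⟩
  · rw [greedy_doubleStarList_append, Finset.sum_const, card_doubleStarList_toFinset]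
    simp
  · refine ⟨_, isExactPruning_diag, ?_⟩
    simp
  · rintro x ⟨Q, hQ, rfl⟩
    simp [hQ.card_eq]
end
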